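/- Let B be a Banach space and q : B → B a continuous map with q(0) = 0 satisfying ‖q(x₁) − q(x₂)‖ ≤ K(‖x₁‖ + ‖x₂‖)‖x₁ − x₂‖ for some constant K > 0 and all x₁, x₂ ∈ B. Then for each y ∈ B with ‖y‖ < 1/(10K) there exists a unique x ∈ B with ‖x‖ ≤ 1/(5K) such that x + q(x) = y. -/

import Mathlib

/-- Quadratic-perturbation fixed-point lemma (Donaldson–Kronheimer Lemma 7.2.23):
if `q : B → B` is continuous with `q 0 = 0` and
`‖q x₁ - q x₂‖ ≤ K (‖x₁‖ + ‖x₂‖) ‖x₁ - x₂‖`, then for each `y` with `‖y‖ < 1/(10K)`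
there is a unique `x` with `‖x‖ ≤ 1/(5K)` solving `x + q x = y`. -/
theorem stmt0 {B : Type*} [NormedAddCommGroup B] [NormedSpace ℝ B] [CompleteSpace B]
    (q : B → B) (hq : Continuous q) (hq0 : q 0 = 0) (K : ℝ) (hK : 0 < K)
    (hquad : ∀ x₁ x₂ : B, ‖q x₁ - q x₂‖ ≤ K * (‖x₁‖ + ‖x₂‖) * ‖x₁ - x₂‖) :
    ∀ y : B, ‖y‖ < 1 / (10 * K) →
      ∃! x : B, ‖x‖ ≤ 1 / (5 * K) ∧ x + q x = y := by
  intro y hy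
  set r : ℝ := 1 / (5 * K) with hr
  have hrpos : 0 < r := by positivity
  have hKr : K * r = 1 / 5 := by rw [hr]; field_simp
  -- bound on q on the ball
  have hqx : ∀ x : B, ‖x‖ ≤ r → ‖q x‖ ≤ r / 5 := by
    intro x hx
    have h := hquad x 0
    simp only [hq0, sub_zero, norm_zero, add_zero] at h
    calc ‖q x‖ ≤ K * ‖x‖ * ‖x‖ := h
      _ ≤ K * r * r := by
          apply mul_le_mul (by nlinarith [norm_nonneg x]) hx (norm_nonneg x) (by positivity)
      _ = r / 5 := by rw [hKr]; ring
  -- uniqueness of solutions in the ball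
  have huniq : ∀ x₁ x₂ : B, ‖x₁‖ ≤ r → ‖x₂‖ ≤ r →
      x₁ + q x₁ = y → x₂ + q x₂ = y → x₁ = x₂ := by
    intro x₁ x₂ h1 h2 e1 e2
    have : x₁ - x₂ = q x₂ - q x₁ := by
      have h := e1.trans e2.symm
      exact sub_eq_sub_iff_add_eq_add.mpr (h.trans (add_comm _ _))
    have hb : ‖x₁ - x₂‖ ≤ K * (‖x₂‖ + ‖x₁‖) * ‖x₂ - x₁‖ := by
      rw [this]; exact hquad x₂ x₁
    have hsym : ‖x₂ - x₁‖ = ‖x₁ - x₂‖ := norm_sub_rev _ _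
    rw [hsym] at hb
    have hco : K * (‖x₂‖ + ‖x₁‖) ≤ 2/5 := by nlinarith
    have : ‖x₁ - x₂‖ ≤ (2/5) * ‖x₁ - x₂‖ := by
      nlinarith [norm_nonneg (x₁ - x₂)]
    have : ‖x₁ - x₂‖ = 0 := by nlinarith [norm_nonneg (x₁ - x₂)]
    exact sub_eq_zero.mp (norm_eq_zero.mp this)
  -- existence via Banach fixed point on the closed ball
  have hSc : IsClosed (Metric.closedBall (0 : B) r) := Metric.isClosed_closedBall
  haveI : CompleteSpace (Metric.closedBall (0 : B) r) := hSc.completeSpace_coe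
  haveI : Nonempty (Metric.closedBall (0 : B) r) :=
    ⟨⟨0, Metric.mem_closedBall_self hrpos.le⟩⟩
  have hmem : ∀ x : B, ‖x‖ ≤ r → y - q x ∈ Metric.closedBall (0 : B) r := by
    intro x hx
    rw [Metric.mem_closedBall, dist_zero_right]
    have h1 : ‖y - q x‖ ≤ ‖y‖ + ‖q x‖ := norm_sub_le _ _
    have h2 := hqx x hx
    have h3 : ‖y‖ ≤ r / 2 := by
      rw [hr]
      calc ‖y‖ ≤ 1 / (10 * K) := hy.le
        _ = 1 / (5 * K) / 2 := by field_simp; ring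
    linarith
  set f : Metric.closedBall (0 : B) r → Metric.closedBall (0 : B) r :=
    fun x => ⟨y - q x.1, hmem x.1 (mem_closedBall_zero_iff.mp x.2)⟩ with hf
  have hlip : LipschitzWith (⟨2/5, by norm_num⟩ : NNReal) f := by
    apply LipschitzWith.of_dist_le_mul
    intro a b
    have ha : ‖a.1‖ ≤ r := mem_closedBall_zero_iff.mp a.2
    have hb : ‖b.1‖ ≤ r := mem_closedBall_zero_iff.mp b.2
    have hd : dist (f a) (f b) = ‖q b.1 - q a.1‖ := by
      rw [Subtype.dist_eq, dist_eq_norm]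
      show ‖(y - q a.1) - (y - q b.1)‖ = _
      congr 1
      abel
    rw [hd]
    have h1 := hquad b.1 a.1
    have hco : K * (‖b.1‖ + ‖a.1‖) ≤ 2/5 := by nlinarith
    have hdd : dist a b = ‖b.1 - a.1‖ := by
      rw [Subtype.dist_eq, dist_eq_norm, norm_sub_rev]
    rw [hdd]
    push_cast
    change ‖q b.1 - q a.1‖ ≤ (2/5 : ℝ) * ‖b.1 - a.1‖
    nlinarith [norm_nonneg (b.1 - a.1)]
  have hcontr : ContractingWith (⟨2/5, by norm_num⟩ : NNReal) f :=
    ⟨NNReal.coe_lt_coe.mp (by rw [NNReal.coe_one]; show (2/5 : ℝ) < 1; norm_num), hlip⟩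
  set x := hcontr.fixedPoint f with hxdef
  have hxfix : f x = x := hcontr.fixedPoint_isFixedPt
  have hxr : ‖(x : B)‖ ≤ r := mem_closedBall_zero_iff.mp x.2
  have hxeq : (x : B) + q x = y := by
    have h : y - q (x : B) = (x : B) := congrArg Subtype.val hxfix
    exact (sub_eq_iff_eq_add.mp h).symm
  exact ⟨x, ⟨hxr, hxeq⟩, fun z hz => huniq z x hz.1 hxr hz.2 hxeq⟩
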